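/- The images of the ordered monomials u₁^a u₂^b u₃^c (a, b, c ∈ ℕ) form a basis of the quotient algebra A as a ℂ-vector space. -/

import Mathlib

/-!
Left multiplication by a generator sends an ordered monomial `u₁^a u₂^b u₃^c` to a combination of
ordered monomials (straighten `u₂ u₁^a`, `u₃ u₂^b` and `u₃ u₁^a` with the relations), so their span
is a left ideal containing `1`, i.e. everything. For independence, the algebra acts on the free
module with basis `e_(a,b,c)` by those same straightening formulas; the relations are checked on
basis vectors, and the monomial `u₁^a u₂^b u₃^c` sends `e_(0,0,0)` to `e_(a,b,c)`.
-/

noncomputable section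

/-- The relation defining the quotient of ℂ⟨u₁,u₂,u₃⟩ by the two-sided ideal
generated by `u₂u₁ − q⁻²u₁u₂`, `u₃u₁ − q⁻²u₁u₃ − ε·u₂²`, `u₃u₂ − q⁻²u₂u₃`. -/
def qpRel (q ε : ℂ) : FreeAlgebra ℂ (Fin 3) → FreeAlgebra ℂ (Fin 3) → Prop :=
  fun a b =>
    (a = FreeAlgebra.ι ℂ 1 * FreeAlgebra.ι ℂ 0 -
        (q ^ 2)⁻¹ • (FreeAlgebra.ι ℂ 0 * FreeAlgebra.ι ℂ 1) ∧ b = 0) ∨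
    (a = FreeAlgebra.ι ℂ 2 * FreeAlgebra.ι ℂ 0 -
        (q ^ 2)⁻¹ • (FreeAlgebra.ι ℂ 0 * FreeAlgebra.ι ℂ 2) -
        ε • (FreeAlgebra.ι ℂ 1 ^ 2) ∧ b = 0) ∨
    (a = FreeAlgebra.ι ℂ 2 * FreeAlgebra.ι ℂ 1 -
        (q ^ 2)⁻¹ • (FreeAlgebra.ι ℂ 1 * FreeAlgebra.ι ℂ 2) ∧ b = 0)

namespace QAlgebra

variable {R : Type*} [CommRing R]

def orderedMonomial {M : Type*} [Monoid M] (x y z : M) (p : ℕ × ℕ × ℕ) : M :=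
  x ^ p.1 * y ^ p.2.1 * z ^ p.2.2

theorem map_orderedMonomial {M N F : Type*} [Monoid M] [Monoid N] [FunLike F M N]
    [MonoidHomClass F M N] (f : F) (x y z : M) (p : ℕ × ℕ × ℕ) :
    f (orderedMonomial x y z p) = orderedMonomial (f x) (f y) (f z) p := by
  simp only [orderedMonomial, map_mul, map_pow]

section Straightening

variable {A : Type*} [Ring A] [Algebra R A] {t ε : R} {x y z : A}

theorem mul_pow_of_mul_eq_smul (h : y * x = t • (x * y)) (n : ℕ) :
    y * x ^ n = t ^ n • (x ^ n * y) := by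
  induction n with
  | zero => simp
  | succ n ih =>
    calc y * x ^ (n + 1) = (y * x) * x ^ n := by rw [pow_succ', mul_assoc]
      _ = t • (x * (y * x ^ n)) := by rw [h, smul_mul_assoc, mul_assoc]
      _ = t ^ (n + 1) • (x ^ (n + 1) * y) := by
        rw [ih, mul_smul_comm, smul_smul, ← mul_assoc, ← pow_succ', ← pow_succ']

theorem sq_mul_of_mul_eq_smul (h : y * x = t • (x * y)) :
    y ^ 2 * x = t ^ 2 • (x * y ^ 2) := by
  calc y ^ 2 * x = y * (y * x) := by rw [sq, mul_assoc]
    _ = t • (t • (x * y) * y) := by rw [h, mul_smul_comm, ← mul_assoc, h]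
    _ = t ^ 2 • (x * y ^ 2) := by rw [smul_mul_assoc, smul_smul, sq, sq, mul_assoc]

/-- The coefficient `c_a` in `u₃ u₁^a = t^a u₁^a u₃ + ε c_a u₁^(a-1) u₂²`. -/
def straightCoeff (t : R) : ℕ → R
  | 0 => 0
  | a + 1 => t * straightCoeff t a + (t ^ 2) ^ a

theorem mul_pow_succ_of_mul_eq_smul_add (h₁ : y * x = t • (x * y))
    (h₂ : z * x = t • (x * z) + ε • y ^ 2) (a : ℕ) :
    z * x ^ (a + 1) =
      t ^ (a + 1) • (x ^ (a + 1) * z) + (ε * straightCoeff t (a + 1)) • (x ^ a * y ^ 2) := by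
  induction a with
  | zero => simp [h₂, straightCoeff]
  | succ a ih =>
    have hy : y ^ 2 * x ^ (a + 1) = (t ^ 2) ^ (a + 1) • (x ^ (a + 1) * y ^ 2) :=
      mul_pow_of_mul_eq_smul (sq_mul_of_mul_eq_smul h₁) _
    calc z * x ^ (a + 1 + 1) = t • (x * (z * x ^ (a + 1))) + ε • (y ^ 2 * x ^ (a + 1)) := by
          rw [pow_succ' x (a + 1), ← mul_assoc, h₂, add_mul, smul_mul_assoc, smul_mul_assoc,
            mul_assoc]
      _ = _ := by
        rw [ih, hy, straightCoeff.eq_2 t (a + 1), mul_add, mul_smul_comm, mul_smul_comm,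
          ← mul_assoc, ← mul_assoc, ← pow_succ', ← pow_succ']
        module

theorem mul_pow_of_mul_eq_smul_add (h₁ : y * x = t • (x * y))
    (h₂ : z * x = t • (x * z) + ε • y ^ 2) (a : ℕ) :
    z * x ^ a = t ^ a • (x ^ a * z) + (ε * straightCoeff t a) • (x ^ (a - 1) * y ^ 2) := by
  cases a with
  | zero => simp [straightCoeff]
  | succ a => exact mul_pow_succ_of_mul_eq_smul_add h₁ h₂ a

theorem orderedMonomial_succ_fst (a b c : ℕ) :
    orderedMonomial x y z (a + 1, b, c) = x * orderedMonomial x y z (a, b, c) := by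
  simp only [orderedMonomial, pow_succ', mul_assoc]

theorem mul_orderedMonomial_of_mul_eq_smul (h : y * x = t • (x * y)) (a b c : ℕ) :
    y * orderedMonomial x y z (a, b, c) = t ^ a • orderedMonomial x y z (a, b + 1, c) := by
  simp only [orderedMonomial, ← mul_assoc, mul_pow_of_mul_eq_smul h, smul_mul_assoc]
  simp only [mul_assoc, ← pow_succ']

theorem mul_orderedMonomial_of_mul_eq_smul_add (h₁ : y * x = t • (x * y))
    (h₂ : z * x = t • (x * z) + ε • y ^ 2) (h₃ : z * y = t • (y * z)) (a b c : ℕ) :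
    z * orderedMonomial x y z (a, b, c) =
      t ^ (a + b) • orderedMonomial x y z (a, b, c + 1) +
        (ε * straightCoeff t a) • orderedMonomial x y z (a - 1, b + 2, c) := by
  have hzy : z * y ^ b = t ^ b • (y ^ b * z) := mul_pow_of_mul_eq_smul h₃ b
  calc z * (x ^ a * y ^ b * z ^ c) = (z * x ^ a) * y ^ b * z ^ c := by simp only [mul_assoc]
    _ = t ^ a • (x ^ a * (z * y ^ b) * z ^ c) +
          (ε * straightCoeff t a) • (x ^ (a - 1) * (y ^ 2 * y ^ b) * z ^ c) := by
      rw [mul_pow_of_mul_eq_smul_add h₁ h₂]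
      simp only [add_mul, smul_mul_assoc, mul_assoc]
    _ = _ := by
      rw [hzy, ← pow_add, add_comm 2 b]
      simp only [orderedMonomial, mul_smul_comm, smul_mul_assoc, smul_smul, ← pow_add, mul_assoc,
        ← pow_succ']

theorem span_range_orderedMonomial_eq_top (hgen : Algebra.adjoin R {x, y, z} = ⊤)
    (h₁ : y * x = t • (x * y)) (h₂ : z * x = t • (x * z) + ε • y ^ 2)
    (h₃ : z * y = t • (y * z)) :
    Submodule.span R (Set.range (orderedMonomial x y z)) = ⊤ := by
  set W := Submodule.span R (Set.range (orderedMonomial x y z))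
  have hmem (p : ℕ × ℕ × ℕ) : orderedMonomial x y z p ∈ W := Submodule.subset_span ⟨p, rfl⟩
  have hgens : ∀ g ∈ ({x, y, z} : Set A), ∀ w ∈ W, g * w ∈ W := by
    intro g hg w hw
    induction hw using Submodule.span_induction with
    | mem _ hw =>
      obtain ⟨⟨a, b, c⟩, rfl⟩ := hw
      rcases hg with rfl | rfl | rfl
      · rw [← orderedMonomial_succ_fst]; exact hmem _
      · rw [mul_orderedMonomial_of_mul_eq_smul h₁]; exact W.smul_mem _ (hmem _)
      · rw [mul_orderedMonomial_of_mul_eq_smul_add h₁ h₂ h₃]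
        exact W.add_mem (W.smul_mem _ (hmem _)) (W.smul_mem _ (hmem _))
    | zero => simp
    | add _ _ _ _ hv hw => rw [mul_add]; exact W.add_mem hv hw
    | smul r _ _ hw => rw [mul_smul_comm]; exact W.smul_mem r hw
  have hall (g : A) : ∀ w ∈ W, g * w ∈ W := by
    have hg : g ∈ Algebra.adjoin R {x, y, z} := hgen ▸ Algebra.mem_top
    induction hg using Algebra.adjoin_induction with
    | mem g hg => exact hgens g hg
    | algebraMap r => intro w hw; rw [← Algebra.smul_def]; exact W.smul_mem r hw
    | add g g' _ _ hg hg' => intro w hw; rw [add_mul]; exact W.add_mem (hg w hw) (hg' w hw)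
    | mul g g' _ _ hg hg' => intro w hw; rw [mul_assoc]; exact hg _ (hg' w hw)
  have hone : (1 : A) ∈ W := by simpa [orderedMonomial] using hmem (0, 0, 0)
  exact Submodule.eq_top_iff'.2 fun g => by simpa using hall g 1 hone

end Straightening

section Quotient

open FreeAlgebra

variable (t ε : R)

/-- `qpRel` with `q⁻²` replaced by an arbitrary scalar `t`. -/
def rel : FreeAlgebra R (Fin 3) → FreeAlgebra R (Fin 3) → Prop :=
  fun a b =>
    (a = ι R 1 * ι R 0 - t • (ι R 0 * ι R 1) ∧ b = 0) ∨
    (a = ι R 2 * ι R 0 - t • (ι R 0 * ι R 2) - ε • (ι R 1 ^ 2) ∧ b = 0) ∨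
    (a = ι R 2 * ι R 1 - t • (ι R 1 * ι R 2) ∧ b = 0)

def gen (i : Fin 3) : RingQuot (rel t ε) := RingQuot.mkAlgHom R (rel t ε) (ι R i)

theorem gen_one_mul_gen_zero : gen t ε 1 * gen t ε 0 = t • (gen t ε 0 * gen t ε 1) := by
  have h := RingQuot.mkAlgHom_rel R (s := rel t ε) (Or.inl ⟨rfl, rfl⟩)
  rwa [map_sub, map_smul, map_mul, map_mul, map_zero, sub_eq_zero] at h

theorem gen_two_mul_gen_zero :
    gen t ε 2 * gen t ε 0 = t • (gen t ε 0 * gen t ε 2) + ε • gen t ε 1 ^ 2 := by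
  have h := RingQuot.mkAlgHom_rel R (s := rel t ε) (Or.inr (Or.inl ⟨rfl, rfl⟩))
  rwa [map_sub, map_sub, map_smul, map_smul, map_mul, map_mul, map_pow, map_zero, sub_sub,
    sub_eq_zero] at h

theorem gen_two_mul_gen_one : gen t ε 2 * gen t ε 1 = t • (gen t ε 1 * gen t ε 2) := by
  have h := RingQuot.mkAlgHom_rel R (s := rel t ε) (Or.inr (Or.inr ⟨rfl, rfl⟩))
  rwa [map_sub, map_smul, map_mul, map_mul, map_zero, sub_eq_zero] at h

theorem adjoin_gen : Algebra.adjoin R {gen t ε 0, gen t ε 1, gen t ε 2} = ⊤ := by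
  have hrange : {gen t ε 0, gen t ε 1, gen t ε 2} =
      RingQuot.mkAlgHom R (rel t ε) '' Set.range (ι R) := by
    ext; simp [gen, Fin.exists_fin_succ, eq_comm]
  rw [hrange, ← AlgHom.map_adjoin, adjoin_range_ι, Algebra.map_top, AlgHom.range_eq_top]
  exact RingQuot.mkAlgHom_surjective R (rel t ε)

theorem span_range_orderedMonomial_gen_eq_top :
    Submodule.span R (Set.range (orderedMonomial (gen t ε 0) (gen t ε 1) (gen t ε 2))) = ⊤ :=
  span_range_orderedMonomial_eq_top (adjoin_gen t ε) (gen_one_mul_gen_zero t ε)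
    (gen_two_mul_gen_zero t ε) (gen_two_mul_gen_one t ε)

variable {t ε} {A : Type*} [Ring A] [Algebra R A] {x y z : A}

def lift (h₁ : y * x = t • (x * y)) (h₂ : z * x = t • (x * z) + ε • y ^ 2)
    (h₃ : z * y = t • (y * z)) : RingQuot (rel t ε) →ₐ[R] A :=
  RingQuot.liftAlgHom R ⟨FreeAlgebra.lift R ![x, y, z], by
    rintro _ _ (⟨rfl, rfl⟩ | ⟨rfl, rfl⟩ | ⟨rfl, rfl⟩) <;>
      simp [h₁, h₂, h₃]⟩

theorem lift_gen (h₁ : y * x = t • (x * y)) (h₂ : z * x = t • (x * z) + ε • y ^ 2)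
    (h₃ : z * y = t • (y * z)) (i : Fin 3) : lift h₁ h₂ h₃ (gen t ε i) = ![x, y, z] i := by
  simp [lift, gen]

end Quotient

section Representation

open Finsupp

variable (t ε : R)

def opX : Module.End R ((ℕ × ℕ × ℕ) →₀ R) :=
  linearCombination R fun p => single (p.1 + 1, p.2.1, p.2.2) 1

def opY : Module.End R ((ℕ × ℕ × ℕ) →₀ R) :=
  linearCombination R fun p => t ^ p.1 • single (p.1, p.2.1 + 1, p.2.2) 1

def opZ : Module.End R ((ℕ × ℕ × ℕ) →₀ R) :=
  linearCombination R fun p =>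
    t ^ (p.1 + p.2.1) • single (p.1, p.2.1, p.2.2 + 1) 1 +
      (ε * straightCoeff t p.1) • single (p.1 - 1, p.2.1 + 2, p.2.2) 1

variable {t ε}

theorem opX_single (a b c : ℕ) (r : R) :
    opX (single (a, b, c) r) = r • single (a + 1, b, c) (1 : R) :=
  linearCombination_single R r _

theorem opY_single (a b c : ℕ) (r : R) :
    opY t (single (a, b, c) r) = r • t ^ a • single (a, b + 1, c) (1 : R) :=
  linearCombination_single R r _

theorem opZ_single (a b c : ℕ) (r : R) :
    opZ t ε (single (a, b, c) r) = r • (t ^ (a + b) • single (a, b, c + 1) (1 : R) +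
      (ε * straightCoeff t a) • single (a - 1, b + 2, c) 1) :=
  linearCombination_single R r _

variable (t ε)

theorem opY_mul_opX : opY t * opX = t • (opX * opY t) := by
  refine Finsupp.lhom_ext fun ⟨a, b, c⟩ r => ?_
  simp only [Module.End.mul_apply, LinearMap.smul_apply, opX_single,
    opY_single, map_smul]
  module

theorem opZ_mul_opY : opZ t ε * opY t = t • (opY t * opZ t ε) := by
  refine Finsupp.lhom_ext fun ⟨a, b, c⟩ r => ?_
  simp only [Module.End.mul_apply, LinearMap.smul_apply, opY_single,
    opZ_single, map_smul, map_add]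
  cases a with
  | zero => simp only [straightCoeff, mul_zero, zero_smul, add_zero]; module
  | succ a => simp only [Nat.add_sub_cancel]; module

theorem opZ_mul_opX : opZ t ε * opX = t • (opX * opZ t ε) + ε • opY t ^ 2 := by
  refine Finsupp.lhom_ext fun ⟨a, b, c⟩ r => ?_
  simp only [Module.End.mul_apply, LinearMap.add_apply, sq,
    LinearMap.smul_apply, opX_single, opY_single, opZ_single, map_smul, map_add,
    Nat.add_sub_cancel, straightCoeff.eq_2]
  cases a with
  | zero => simp only [straightCoeff, mul_zero, zero_smul, add_zero]; module
  | succ a => simp only [Nat.add_sub_cancel]; module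

theorem orderedMonomial_op_single_zero (p : ℕ × ℕ × ℕ) :
    orderedMonomial opX (opY t) (opZ t ε) p (single 0 1) = single p 1 := by
  obtain ⟨a, b, c⟩ := p
  have hz (c : ℕ) : (opZ t ε ^ c) (single 0 1) = single (0, 0, c) (1 : R) := by
    induction c with
    | zero => rfl
    | succ c ih => rw [pow_succ', Module.End.mul_apply, ih, opZ_single]; simp [straightCoeff]
  have hy (b : ℕ) : (opY t ^ b) (single (0, 0, c) 1) = single (0, b, c) (1 : R) := by
    induction b with
    | zero => rfl
    | succ b ih => rw [pow_succ', Module.End.mul_apply, ih, opY_single]; simp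
  have hx (a : ℕ) : (opX ^ a) (single (0, b, c) 1) = single (a, b, c) (1 : R) := by
    induction a with
    | zero => rfl
    | succ a ih => rw [pow_succ', Module.End.mul_apply, ih, opX_single]; simp
  simp only [orderedMonomial, Module.End.mul_apply, hz, hy, hx]

theorem linearIndependent_orderedMonomial_gen :
    LinearIndependent R (orderedMonomial (gen t ε 0) (gen t ε 1) (gen t ε 2)) := by
  let ρ := lift (A := Module.End R ((ℕ × ℕ × ℕ) →₀ R))
    (opY_mul_opX t) (opZ_mul_opX t ε) (opZ_mul_opY t ε)
  refine LinearIndependent.of_comp ((LinearMap.applyₗ (single 0 1)).comp ρ.toLinearMap) ?_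
  convert (Finsupp.basisSingleOne (R := R) (ι := ℕ × ℕ × ℕ)).linearIndependent using 1
  funext p
  change ρ (orderedMonomial (gen t ε 0) (gen t ε 1) (gen t ε 2) p) (single 0 1) = single p 1
  rw [map_orderedMonomial, lift_gen, lift_gen, lift_gen]
  exact orderedMonomial_op_single_zero t ε p

end Representation

end QAlgebra

open QAlgebra in
theorem ordered_monomials_basis_general (q ε : ℂ) :
    LinearIndependent ℂ
        (fun abc : ℕ × ℕ × ℕ =>
          RingQuot.mkAlgHom ℂ (qpRel q ε)
            (FreeAlgebra.ι ℂ 0 ^ abc.1 * FreeAlgebra.ι ℂ 1 ^ abc.2.1 *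
              FreeAlgebra.ι ℂ 2 ^ abc.2.2)) ∧
      Submodule.span ℂ
          (Set.range
            (fun abc : ℕ × ℕ × ℕ =>
              RingQuot.mkAlgHom ℂ (qpRel q ε)
                (FreeAlgebra.ι ℂ 0 ^ abc.1 * FreeAlgebra.ι ℂ 1 ^ abc.2.1 *
                  FreeAlgebra.ι ℂ 2 ^ abc.2.2))) = ⊤ := by
  have hmon : (fun abc : ℕ × ℕ × ℕ => RingQuot.mkAlgHom ℂ (qpRel q ε)
      (FreeAlgebra.ι ℂ 0 ^ abc.1 * FreeAlgebra.ι ℂ 1 ^ abc.2.1 * FreeAlgebra.ι ℂ 2 ^ abc.2.2)) =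
      orderedMonomial (gen (q ^ 2)⁻¹ ε 0) (gen (q ^ 2)⁻¹ ε 1) (gen (q ^ 2)⁻¹ ε 2) :=
    funext (map_orderedMonomial (RingQuot.mkAlgHom ℂ (rel (q ^ 2)⁻¹ ε)) _ _ _)
  rw [hmon]
  exact ⟨linearIndependent_orderedMonomial_gen _ ε, span_range_orderedMonomial_gen_eq_top _ ε⟩

/-- Proposition 7: the ordered monomials `u₁^a u₂^b u₃^c` form a ℂ-basis of the
quotient algebra, i.e. their images are linearly independent and span. -/
theorem ordered_monomials_basis (q ε : ℂ) (hq : q ≠ 0) :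
    LinearIndependent ℂ
        (fun abc : ℕ × ℕ × ℕ =>
          RingQuot.mkAlgHom ℂ (qpRel q ε)
            (FreeAlgebra.ι ℂ 0 ^ abc.1 * FreeAlgebra.ι ℂ 1 ^ abc.2.1 *
              FreeAlgebra.ι ℂ 2 ^ abc.2.2)) ∧
      Submodule.span ℂ
          (Set.range
            (fun abc : ℕ × ℕ × ℕ =>
              RingQuot.mkAlgHom ℂ (qpRel q ε)
                (FreeAlgebra.ι ℂ 0 ^ abc.1 * FreeAlgebra.ι ℂ 1 ^ abc.2.1 *
                  FreeAlgebra.ι ℂ 2 ^ abc.2.2))) = ⊤ :=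
  ordered_monomials_basis_general q ε
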